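/- arXiv:1612.05167 — 5 statements merged into one kernel-verified Lean document; each statement's English description precedes it below -/
import Mathlib

section
/- If $\sum a_n$ is a divergent series with positive terms, then there exists a monotone nonincreasing sequence $\{B_n\}$ of positive reals with $\lim_{n\to\infty} B_n = 0$ such that $\sum a_n B_n$ diverges. -/
open Filter

theorem stmt1 (a : ℕ → ℝ) (ha : ∀ n, 0 < a n)
    (hdiv : Tendsto (fun n => ∑ i ∈ Finset.range n, a i) atTop atTop) :
    ∃ B : ℕ → ℝ, Antitone B ∧ (∀ n, 0 < B n) ∧
      Tendsto B atTop (nhds 0) ∧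
      Tendsto (fun n => ∑ i ∈ Finset.range n, a i * B i) atTop atTop := by
  set S : ℕ → ℝ := fun n => ∑ i ∈ Finset.range n, a i with hS
  set M : ℕ → ℝ := fun n => max 1 (S n) with hM
  have hMpos : ∀ n, 0 < M n := fun n => lt_of_lt_of_le zero_lt_one (le_max_left _ _)
  have hSmono : Monotone S := by
    apply monotone_nat_of_le_succ
    intro n
    simp only [hS, Finset.sum_range_succ]
    nlinarith [ha n]
  have hMmono : Monotone M := fun m n h => max_le_max le_rfl (hSmono h)
  have hMtop : Tendsto M atTop atTop :=
    tendsto_atTop_mono (fun n => le_max_right 1 (S n)) hdiv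
  refine ⟨fun n => (M n)⁻¹, ?_, fun n => inv_pos.mpr (hMpos n), ?_, ?_⟩
  · intro m n h
    exact inv_anti₀ (hMpos m) (hMmono h)
  · exact hMtop.inv_tendsto_atTop
  · have key : ∀ n, Real.log (M n) ≤ ∑ i ∈ Finset.range n, a i * (M i)⁻¹ := by
      intro n
      induction n with
      | zero => simp [hM, hS]
      | succ n ih =>
        rw [Finset.sum_range_succ]
        have h1 : (1:ℝ) ≤ M n := le_max_left _ _
        have h2 : M n ≤ M (n + 1) := hMmono (Nat.le_succ n)
        have h3 : M (n + 1) - M n ≤ a n := by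
          have hs : S (n + 1) = S n + a n := by
            simp [hS, Finset.sum_range_succ]
          simp only [hM, hs]
          rcases le_total 1 (S n) with h | h
          · rw [max_eq_right h]
            rcases le_total 1 (S n + a n) with h' | h'
            · rw [max_eq_right h']; linarith
            · rw [max_eq_left h']; nlinarith [ha n]
          · rw [max_eq_left h]
            rcases le_total 1 (S n + a n) with h' | h'
            · rw [max_eq_right h']; linarith
            · rw [max_eq_left h']; nlinarith [ha n]
        have hlog : Real.log (M (n + 1)) - Real.log (M n) ≤ a n * (M n)⁻¹ := by
          have hdiv' : Real.log (M (n + 1)) - Real.log (M n)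
              = Real.log (M (n + 1) / M n) := by
            rw [Real.log_div (ne_of_gt (hMpos _)) (ne_of_gt (hMpos _))]
          rw [hdiv']
          have := Real.log_le_sub_one_of_pos
            (div_pos (hMpos (n + 1)) (hMpos n))
          calc Real.log (M (n + 1) / M n) ≤ M (n + 1) / M n - 1 := this
            _ = (M (n + 1) - M n) / M n := by
                field_simp
            _ ≤ a n / M n := by
                exact div_le_div_of_nonneg_right h3 (hMpos n).le
            _ = a n * (M n)⁻¹ := div_eq_mul_inv _ _
        linarith
    exact tendsto_atTop_mono key
      ((Real.tendsto_log_atTop.comp hMtop))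
end

section
/- (Kummer's test, convergence, necessity) If $\sum a_n$ is a convergent positive series, then there exists a positive sequence $\{p_n\}$ and a real number $c > 0$ such that $p_n \frac{a_n}{a_{n+1}} - p_{n+1} \geq c$ for all $n$. -/
theorem stmt5 (a : ℕ → ℝ) (ha : ∀ n, 0 < a n) (hsum : Summable a) :
    ∃ p : ℕ → ℝ, (∀ n, 0 < p n) ∧ ∃ c : ℝ, 0 < c ∧
      ∀ n, c ≤ p n * (a n / a (n + 1)) - p (n + 1) := by
  have hs : ∀ m : ℕ, Summable (fun k => a (m + k)) := fun m =>
    ((summable_nat_add_iff m).mpr hsum).congr (fun k => by rw [Nat.add_comm])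
  have hpos : ∀ m : ℕ, 0 < ∑' k, a (m + k) := fun m =>
    Summable.tsum_pos (hs m) (fun k => (ha _).le) 0 (ha m)
  refine ⟨fun n => (∑' k, a (n + 1 + k)) / a n, fun n => div_pos (hpos _) (ha n),
    1, one_pos, fun n => ?_⟩
  have h1 : (∑' k, a (n + 1 + k)) / a n * (a n / a (n + 1))
      = (∑' k, a (n + 1 + k)) / a (n + 1) := by
    rw [div_mul_div_comm, mul_comm (a n), mul_div_mul_right _ _ (ha n).ne']
  have h2 : (∑' k, a (n + 1 + k)) = a (n + 1) + ∑' k, a (n + 1 + 1 + k) := by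
    rw [Summable.tsum_eq_zero_add (hs (n + 1))]
    rw [Nat.add_zero, tsum_congr (fun k => by rw [show n + 1 + (k + 1) = n + 1 + 1 + k from by omega])]
  rw [h1, h2, add_div, div_self (ha (n + 1)).ne']
  simp
end

section
/- (Kummer's test, divergence, sufficiency) Let $\sum a_n$ be a positive series. If there exists a positive sequence $\{p_n\}$ such that $\sum 1/p_n$ diverges and $p_n \frac{a_n}{a_{n+1}} - p_{n+1} \leq 0$ for all $n$, then $\sum a_n$ diverges. -/
open Filter

theorem stmt6 (a p : ℕ → ℝ) (ha : ∀ n, 0 < a n) (hp : ∀ n, 0 < p n)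
    (hpdiv : Tendsto (fun n => ∑ i ∈ Finset.range n, 1 / p i) atTop atTop)
    (h : ∀ n, p n * (a n / a (n + 1)) - p (n + 1) ≤ 0) :
    Tendsto (fun n => ∑ i ∈ Finset.range n, a i) atTop atTop := by
  set c := p 0 * a 0 with hc
  have hc0 : 0 < c := mul_pos (hp 0) (ha 0)
  have key : ∀ n, c ≤ p n * a n := by
    intro n
    induction n with
    | zero => exact le_refl _
    | succ n ih =>
      refine ih.trans ?_
      have h2 : p n * (a n / a (n + 1)) ≤ p (n + 1) := by linarith [h n]
      calc p n * a n = p n * (a n / a (n + 1)) * a (n + 1) := by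
            rw [mul_div_assoc', div_mul_cancel₀ _ (ha (n + 1)).ne']
          _ ≤ p (n + 1) * a (n + 1) :=
            mul_le_mul_of_nonneg_right h2 (ha (n + 1)).le
  have hineq : ∀ n, c * (1 / p n) ≤ a n := fun n => by
    rw [mul_one_div, div_le_iff₀ (hp n)]
    linarith [key n]
  refine tendsto_atTop_mono ?_ (hpdiv.const_mul_atTop hc0)
  intro n
  simp only [Finset.mul_sum]
  exact Finset.sum_le_sum fun i _ => hineq i
end

section
/- (Kummer's test, full equivalence for convergence) A positive series $\sum a_n$ converges if and only if there exists a positive sequence $\{p_n\}$ and a real number $c > 0$ such that $p_n \frac{a_n}{a_{n+1}} - p_{n+1} \geq c$ for all $n$. -/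
theorem stmt8 (a : ℕ → ℝ) (ha : ∀ n, 0 < a n) :
    Summable a ↔
      ∃ p : ℕ → ℝ, (∀ n, 0 < p n) ∧ ∃ c : ℝ, 0 < c ∧
        ∀ n, c ≤ p n * (a n / a (n + 1)) - p (n + 1) := by
  constructor
  · intro hs
    have hsum : ∀ m : ℕ, Summable (fun k => a (k + m)) := fun m =>
      (summable_nat_add_iff m).mpr hs
    refine ⟨fun n => (∑' k, a (k + (n + 1))) / a n, ?_, 1, one_pos, ?_⟩
    · intro n
      have : 0 < ∑' k, a (k + (n + 1)) :=
        Summable.tsum_pos (hsum (n + 1)) (fun i => (ha _).le) 0 (ha _)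
      exact div_pos this (ha n)
    · intro n
      have hshift : (∑' k, a (k + (n + 1))) = a (n + 1) + ∑' k, a (k + (n + 2)) := by
        rw [Summable.tsum_eq_zero_add (hsum (n + 1))]
        congr 1
        · norm_num
        · apply tsum_congr
          intro k
          congr 1
          omega
      have han := ha n
      have han1 := ha (n + 1)
      have h1 : (∑' k, a (k + (n + 1))) / a n * (a n / a (n + 1)) =
          (∑' k, a (k + (n + 1))) / a (n + 1) := by
        field_simp
      rw [h1, hshift, div_sub_div_same, add_sub_cancel_right, div_self han1.ne']
  · rintro ⟨p, hp, c, hc, hK⟩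
    have key : ∀ n, c * a (n + 1) ≤ p n * a n - p (n + 1) * a (n + 1) := by
      intro n
      have han1 := ha (n + 1)
      have h := mul_le_mul_of_nonneg_right (hK n) han1.le
      calc c * a (n + 1)
          ≤ (p n * (a n / a (n + 1)) - p (n + 1)) * a (n + 1) := by linarith [h]
        _ = p n * a n - p (n + 1) * a (n + 1) := by field_simp
    have tele : ∀ N, c * ∑ i ∈ Finset.range N, a (i + 1) ≤ p 0 * a 0 - p N * a N := by
      intro N
      induction N with
      | zero => simp
      | succ N ih =>
        rw [Finset.sum_range_succ, mul_add]
        have := key N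
        linarith
    apply summable_of_sum_range_le (c := a 0 + p 0 * a 0 / c)
    · intro n; exact (ha n).le
    · intro n
      cases n with
      | zero =>
        simp only [Finset.range_zero, Finset.sum_empty]
        have := mul_pos (hp 0) (ha 0)
        have : 0 ≤ p 0 * a 0 / c := by positivity
        linarith [ha 0]
      | succ N =>
        rw [Finset.sum_range_succ']
        have h1 := tele N
        have h2 : 0 < p N * a N := mul_pos (hp N) (ha N)
        have : ∑ i ∈ Finset.range N, a (i + 1) ≤ p 0 * a 0 / c := by
          rw [le_div_iff₀ hc]
          nlinarith
        linarith
end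

section
/- Let $\sum a_n$ be a divergent positive series with $\lim_{n\to\infty} a_n = 0$. Define $B_n = 1/k$ for $n \in [\xi_k, \xi_{k+1})$, where $\{\xi_n\}$ is a strictly increasing sequence with $\xi_1 = 1$ and $\sum_{k=\xi_n}^{\xi_{n+1}-1} a_k > n$. Then $\sum a_n B_n$ diverges. -/
open Filter

theorem stmt14 (a : ℕ → ℝ) (ha : ∀ n, 0 < a n)
    (hdiv : Tendsto (fun n => ∑ i ∈ Finset.range n, a i) atTop atTop)
    (ha0 : Tendsto a atTop (nhds 0))
    (ξ : ℕ → ℕ) (hξ : StrictMono ξ) (hξ1 : ξ 1 = 1)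
    (hblock : ∀ n : ℕ, 1 ≤ n → (n : ℝ) < ∑ k ∈ Finset.Ico (ξ n) (ξ (n + 1)), a k)
    (B : ℕ → ℝ)
    (hB : ∀ k ≥ 1, ∀ n, ξ k ≤ n → n < ξ (k + 1) → B n = 1 / (k : ℝ)) :
    Tendsto (fun n => ∑ i ∈ Finset.range n, a i * B i) atTop atTop := by
  have hBpos : ∀ n, 1 ≤ n → 0 < B n := by
    intro n hn
    set k := Nat.findGreatest (fun k => ξ k ≤ n) n with hkdef
    have h1 : ξ 1 ≤ n := by rw [hξ1]; exact hn
    have hk1 : 1 ≤ k := Nat.le_findGreatest hn h1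
    have hkle : ξ k ≤ n := Nat.findGreatest_spec (P := fun k => ξ k ≤ n) hn h1
    have hlt : n < ξ (k + 1) := by
      by_cases hc : k + 1 ≤ n
      · have := Nat.findGreatest_is_greatest (P := fun k => ξ k ≤ n)
          (by omega : k < k + 1) hc
        omega
      · have : k + 1 ≤ ξ (k + 1) := hξ.le_apply
        omega
    rw [hB k hk1 n hkle hlt]
    positivity
  have hterm : ∀ i, 1 ≤ i → 0 ≤ a i * B i := fun i hi =>
    le_of_lt (mul_pos (ha i) (hBpos i hi))
  have hmono : ∀ m n, 1 ≤ m → m ≤ n →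
      (∑ i ∈ Finset.range m, a i * B i) ≤ ∑ i ∈ Finset.range n, a i * B i := by
    intro m n hm hmn
    apply Finset.sum_le_sum_of_subset_of_nonneg
      (Finset.range_subset_range.mpr hmn)
    intro i hi hnotin
    simp only [Finset.mem_range, not_lt] at hnotin
    exact hterm i (le_trans hm hnotin)
  have hkey : ∀ N : ℕ, a 0 * B 0 + N ≤ ∑ i ∈ Finset.range (ξ (N + 1)), a i * B i := by
    intro N
    induction N with
    | zero => simp [hξ1]
    | succ N ih =>
      have hsub : ξ (N + 1) ≤ ξ (N + 2) := hξ.monotone (by omega)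
      rw [← Finset.sum_range_add_sum_Ico _ hsub]
      have hBval : ∀ i ∈ Finset.Ico (ξ (N + 1)) (ξ (N + 2)), a i * B i = a i * (1 / ((N:ℝ) + 1)) := by
        intro i hi
        rw [Finset.mem_Ico] at hi
        rw [hB (N + 1) (by omega) i hi.1 hi.2]
        push_cast
        ring_nf
      have hblocksum : (1 : ℝ) ≤ ∑ i ∈ Finset.Ico (ξ (N + 1)) (ξ (N + 2)), a i * B i := by
        rw [Finset.sum_congr rfl hBval, ← Finset.sum_mul]
        have hb := hblock (N + 1) (by omega)
        push_cast at hb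
        calc (1 : ℝ) = ((N:ℝ)+1) * (1/((N:ℝ)+1)) := by field_simp
          _ ≤ _ := mul_le_mul_of_nonneg_right (le_of_lt hb) (by positivity)
      push_cast
      linarith
  rw [tendsto_atTop]
  intro b
  set N := ⌈b - a 0 * B 0⌉₊ with hN
  filter_upwards [eventually_ge_atTop (ξ (N + 1))] with n hn
  have h1 : 1 ≤ ξ (N + 1) := by
    rw [← hξ1]; exact hξ.monotone (by omega)
  have hceil := Nat.le_ceil (b - a 0 * B 0)
  calc b ≤ a 0 * B 0 + N := by rw [hN]; linarith
    _ ≤ ∑ i ∈ Finset.range (ξ (N + 1)), a i * B i := hkey N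
    _ ≤ _ := hmono _ n h1 hn
end
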